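/- arXiv:2405.16074 — 2 statements merged into one kernel-verified Lean document; each statement's English description precedes it below -/
import Mathlib

section
/- Poincaré–Sobolev inequality on the infinite strip: for every q ∈ [2,∞) there exists a constant C(q) > 0, depending only on q, such that every continuously differentiable vector field u = (u₁,u₂) on Ω_∞ that vanishes identically for all sufficiently large |x₁|, satisfies ∂₁u₁ + ∂₂u₂ = 0 on Ω_∞, and satisfies u₂(x₁,0) = u₂(x₁,1) = 0 for all x₁ ∈ ℝ, obeys ‖u‖_{L^q(Ω_∞)} ≤ C(q)·‖∇u‖_{L²(Ω_∞)}. -/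
open MeasureTheory Set

noncomputable section

/-- first partial derivative in the horizontal direction -/
def pd1 (u : ℝ × ℝ → ℝ) (x : ℝ × ℝ) : ℝ := fderiv ℝ u x (1, 0)

/-- first partial derivative in the vertical direction -/
def pd2 (u : ℝ × ℝ → ℝ) (x : ℝ × ℝ) : ℝ := fderiv ℝ u x (0, 1)

/-- the infinite strip `Ω_∞ = ℝ × [0,1]` -/
def Strip : Set (ℝ × ℝ) := (univ : Set ℝ) ×ˢ (Icc (0 : ℝ) 1)

/-- `L^q` norm of a scalar function on a planar region -/
def lqNorm (q : ℝ) (Ω : Set (ℝ × ℝ)) (f : ℝ × ℝ → ℝ) : ℝ :=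
  (∫ x in Ω, |f x| ^ q) ^ (1 / q)

/-- `L^q` norm of a planar vector field (components `u1`, `u2`) -/
def lqNormVec (q : ℝ) (Ω : Set (ℝ × ℝ)) (u1 u2 : ℝ × ℝ → ℝ) : ℝ :=
  ((lqNorm q Ω u1) ^ q + (lqNorm q Ω u2) ^ q) ^ (1 / q)

/-- `L²` norm of the full gradient of a planar vector field -/
def gradL2Norm (Ω : Set (ℝ × ℝ)) (u1 u2 : ℝ × ℝ → ℝ) : ℝ :=
  ((lqNorm 2 Ω (pd1 u1)) ^ (2 : ℝ) + (lqNorm 2 Ω (pd2 u1)) ^ (2 : ℝ) +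
    (lqNorm 2 Ω (pd1 u2)) ^ (2 : ℝ) + (lqNorm 2 Ω (pd2 u2)) ^ (2 : ℝ)) ^ ((1 : ℝ) / 2)

/-
Let `N` be the `L²` norm of `∇u`. On every vertical segment `u₂` vanishes at the bottom, and `u₁`
has mean zero: by the divergence theorem on `[a, b] × [0, 1]` with `a` far to the left, the flux
`∫₀¹ u₁(b, t) dt` equals the flux of `u₂` through the horizontal sides, which is zero. So the
Poincaré inequality on vertical segments gives `‖uᵢ‖₂ ≤ ‖∂₂uᵢ‖₂ ≤ N`, and it remains to bound
`‖v‖_q` for a scalar `v` with `‖v‖₂, ‖∂₁v‖₂, ‖∂₂v‖₂ ≤ N`.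

Bounding `|w(x)|` both by `∫₀¹ (|w| + |∂₂w|)(x₁, t) dt` and by `∫ |∂₁w|(s, x₂) ds` and integrating
the product of the two bounds gives `∫ w² ≤ (∫ |w| + ∫ |∂₂w|) ∫ |∂₁w|`. For `w = v ^ (n + 1)`,
Cauchy–Schwarz turns this into `∫ v ^ (2n + 2) ≤ (n + 1)(n + 2) N² ∫ v ^ (2n)`, hence
`∫ v ^ (2n) ≤ n! (n + 1)! N ^ (2n)`, and `|c| ^ q ≤ N ^ (q - 2) c² + N ^ (q - 2n) c ^ (2n)` for
`2 ≤ q ≤ 2n` interpolates between `L²` and `L^(2n)`.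
-/

open Filter Topology ProbabilityTheory
open scoped Nat

section Integrals

variable {α β : Type*} [MeasurableSpace α] [MeasurableSpace β] {μ : Measure α} {ν : Measure β}

theorem integral_abs_mul_abs_le_sqrt_mul_sqrt {f g : α → ℝ} (hf : MemLp f 2 μ)
    (hg : MemLp g 2 μ) : ∫ x, |f x| * |g x| ∂μ ≤ √(∫ x, f x ^ 2 ∂μ) * √(∫ x, g x ^ 2 ∂μ) := by
  have h := integral_mul_le_Lp_mul_Lq_of_nonneg Real.HolderConjugate.two_two
    (ae_of_all _ fun x => abs_nonneg (f x)) (ae_of_all _ fun x => abs_nonneg (g x))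
    (by rw [ENNReal.ofReal_ofNat]; exact hf.abs)
    (by rw [ENNReal.ofReal_ofNat]; exact hg.abs)
  simpa [Real.sqrt_eq_rpow, sq_abs] using h

theorem sq_integral_abs_le_integral_sq [IsProbabilityMeasure μ] {f : α → ℝ} (hf : MemLp f 2 μ) :
    (∫ x, |f x| ∂μ) ^ 2 ≤ ∫ x, f x ^ 2 ∂μ := by
  have h := variance_nonneg |f| μ
  rw [variance_eq_sub hf.abs] at h
  simpa [sq_abs] using h

variable [SigmaFinite μ] [SigmaFinite ν]

theorem integral_le_of_le_integral_slice [IsProbabilityMeasure ν] {f g : α × β → ℝ}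
    (hf : Integrable f (μ.prod ν)) (hg : Integrable g (μ.prod ν))
    (hfg : ∀ᵐ z ∂μ.prod ν, f z ≤ ∫ t, g (z.1, t) ∂ν) :
    ∫ z, f z ∂μ.prod ν ≤ ∫ z, g z ∂μ.prod ν :=
  calc ∫ z, f z ∂μ.prod ν ≤ ∫ z, (∫ t, g (z.1, t) ∂ν) ∂μ.prod ν :=
        integral_mono_ae hf (hg.integral_prod_left.comp_fst ν) hfg
    _ = ∫ z, g z ∂μ.prod ν := by
        rw [integral_fun_fst (fun x => ∫ t, g (x, t) ∂ν), probReal_univ, one_smul,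
          integral_prod _ hg]

theorem integral_sq_le_integral_mul_integral_of_abs_le {w G H : α × β → ℝ}
    (hG : Integrable G (μ.prod ν)) (hH : Integrable H (μ.prod ν))
    (hwG : ∀ᵐ z ∂μ.prod ν, |w z| ≤ ∫ t, G (z.1, t) ∂ν)
    (hwH : ∀ᵐ z ∂μ.prod ν, |w z| ≤ ∫ s, H (s, z.2) ∂μ) :
    ∫ z, w z ^ 2 ∂μ.prod ν ≤ (∫ z, G z ∂μ.prod ν) * ∫ z, H z ∂μ.prod ν :=
  calc ∫ z, w z ^ 2 ∂μ.prod ν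
      ≤ ∫ z, (∫ t, G (z.1, t) ∂ν) * (∫ s, H (s, z.2) ∂μ) ∂μ.prod ν := by
        refine integral_mono_of_nonneg (ae_of_all _ fun z => sq_nonneg _)
          (hG.integral_prod_left.mul_prod hH.integral_prod_right) ?_
        filter_upwards [hwG, hwH] with z hG hH
        rw [← sq_abs, sq]
        exact mul_le_mul hG hH (abs_nonneg _) ((abs_nonneg _).trans hG)
    _ = (∫ z, G z ∂μ.prod ν) * ∫ z, H z ∂μ.prod ν := by
        rw [integral_prod_mul (fun x => ∫ t, G (x, t) ∂ν) (fun t => ∫ s, H (s, t) ∂μ),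
          integral_prod _ hG, integral_prod_symm _ hH]

end Integrals

section OneDimensional

variable {f f' : ℝ → ℝ}

theorem abs_sub_le_integral_abs_deriv {a b : ℝ} (hf : ∀ x ∈ Icc a b, HasDerivAt f (f' x) x)
    (hf' : ContinuousOn f' (Icc a b)) {s t : ℝ} (hs : s ∈ Icc a b) (ht : t ∈ Icc a b) :
    |f t - f s| ≤ ∫ x in Icc a b, |f' x| := by
  have hst := uIcc_subset_Icc hs ht
  rw [← intervalIntegral.integral_eq_sub_of_hasDerivAt (fun x hx => hf x (hst hx))
    ((hf'.mono hst).intervalIntegrable)]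
  calc |∫ x in s..t, f' x| ≤ ∫ x in Set.uIoc s t, |f' x| := by
        simpa only [Real.norm_eq_abs] using
          intervalIntegral.norm_integral_le_integral_norm_uIoc (f := f') (μ := volume)
    _ ≤ ∫ x in Icc a b, |f' x| :=
        setIntegral_mono_set hf'.abs.integrableOn_Icc (ae_of_all _ fun _ => abs_nonneg _)
          (ae_of_all _ (uIoc_subset_uIcc.trans hst))

instance : IsProbabilityMeasure (volume.restrict (Icc (0 : ℝ) 1)) :=
  ⟨by simp⟩

theorem abs_le_abs_integral_add_integral_abs_deriv (hf : ∀ x ∈ Icc 0 1, HasDerivAt f (f' x) x)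
    (hf' : ContinuousOn f' (Icc 0 1)) {t : ℝ} (ht : t ∈ Icc (0 : ℝ) 1) :
    |f t| ≤ |∫ s in Icc 0 1, f s| + ∫ x in Icc 0 1, |f' x| := by
  have hfc : ContinuousOn f (Icc 0 1) := fun x hx => (hf x hx).continuousAt.continuousWithinAt
  have hmean : f t - ∫ s in Icc 0 1, f s = ∫ s in Icc 0 1, (f t - f s) := by
    rw [integral_sub (integrable_const _) hfc.integrableOn_Icc, integral_const, probReal_univ,
      one_smul]
  have hosc : |f t - ∫ s in Icc 0 1, f s| ≤ ∫ x in Icc 0 1, |f' x| :=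
    calc |f t - ∫ s in Icc 0 1, f s| ≤ ∫ s in Icc 0 1, |f t - f s| := by
          rw [hmean]; exact abs_integral_le_integral_abs
      _ ≤ ∫ _ in Icc (0 : ℝ) 1, ∫ x in Icc 0 1, |f' x| :=
          integral_mono_of_nonneg (ae_of_all _ fun _ => abs_nonneg _) (integrable_const _)
            ((ae_restrict_mem measurableSet_Icc).mono fun s hs =>
              abs_sub_le_integral_abs_deriv hf hf' hs ht)
      _ = ∫ x in Icc 0 1, |f' x| := by rw [integral_const, probReal_univ, one_smul]
  linarith [abs_sub_abs_le_abs_sub (f t) (∫ s in Icc 0 1, f s)]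

theorem abs_le_integral_abs_deriv (hf : ∀ x, HasDerivAt f (f' x) x) (hf' : Integrable f')
    (hlim : Tendsto f atBot (𝓝 0)) (t : ℝ) : |f t| ≤ ∫ x, |f' x| := by
  rw [← sub_zero (f t), ← integral_Iic_of_hasDerivAt_of_tendsto' (fun x _ => hf x)
    hf'.integrableOn hlim]
  calc |∫ x in Iic t, f' x| ≤ ∫ x in Iic t, |f' x| := abs_integral_le_integral_abs
    _ ≤ ∫ x, |f' x| := setIntegral_le_integral hf'.abs (ae_of_all _ fun _ => abs_nonneg _)

end OneDimensional

theorem abs_rpow_le_of_le_two_mul {q s : ℝ} {n : ℕ} (hs : 0 < s) (hq : 2 ≤ q) (hqn : q ≤ 2 * n)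
    (c : ℝ) : |c| ^ q ≤ s ^ (q - 2) * c ^ 2 + s ^ (q - 2 * n) * c ^ (2 * n) := by
  have hsplit : ∀ p : ℝ, |c| ^ q = |c| ^ (q - p) * |c| ^ p := fun p => by
    rw [← Real.rpow_add' (abs_nonneg c) (by linarith), sub_add_cancel]
  rcases le_total |c| s with hc | hc
  · calc |c| ^ q = |c| ^ (q - 2) * c ^ 2 := by rw [hsplit 2, Real.rpow_two, sq_abs]
      _ ≤ s ^ (q - 2) * c ^ 2 := by gcongr
      _ ≤ _ :=
          le_add_of_nonneg_right (mul_nonneg (by positivity) ((even_two_mul n).pow_nonneg c))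
  · calc |c| ^ q = |c| ^ (q - 2 * n) * c ^ (2 * n) := by
          rw [hsplit (2 * n), ← (even_two_mul n).pow_abs, ← Real.rpow_natCast]; push_cast; rfl
      _ ≤ s ^ (q - 2 * n) * c ^ (2 * n) :=
          mul_le_mul_of_nonneg_right (Real.rpow_le_rpow_of_nonpos hs hc (by linarith))
            ((even_two_mul n).pow_nonneg c)
      _ ≤ _ := le_add_of_nonneg_left (by positivity)

section PartialDerivatives

variable {w : ℝ × ℝ → ℝ}

theorem hasDerivAt_pd1 {s t : ℝ} (hw : DifferentiableAt ℝ w (s, t)) :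
    HasDerivAt (fun s => w (s, t)) (pd1 w (s, t)) s :=
  hw.hasFDerivAt.comp_hasDerivAt s ((hasDerivAt_id s).prodMk (hasDerivAt_const s t))

theorem hasDerivAt_pd2 {s t : ℝ} (hw : DifferentiableAt ℝ w (s, t)) :
    HasDerivAt (fun t => w (s, t)) (pd2 w (s, t)) t :=
  hw.hasFDerivAt.comp_hasDerivAt t ((hasDerivAt_const t s).prodMk (hasDerivAt_id t))

theorem continuous_pd1 (hw : ContDiff ℝ 1 w) : Continuous (pd1 w) :=
  (hw.continuous_fderiv one_ne_zero).clm_apply continuous_const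

theorem continuous_pd2 (hw : ContDiff ℝ 1 w) : Continuous (pd2 w) :=
  (hw.continuous_fderiv one_ne_zero).clm_apply continuous_const

theorem continuous_pd2_slice (hw : ContDiff ℝ 1 w) (s : ℝ) : Continuous fun t => pd2 w (s, t) :=
  (continuous_pd2 hw).comp (continuous_const.prodMk continuous_id)

theorem pd1_pow {x : ℝ × ℝ} (hw : DifferentiableAt ℝ w x) (n : ℕ) :
    pd1 (fun y => w y ^ n) x = n * w x ^ (n - 1) * pd1 w x := by
  rw [pd1, fderiv_fun_pow n hw]
  simp [pd1, nsmul_eq_mul, mul_assoc]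

theorem pd2_pow {x : ℝ × ℝ} (hw : DifferentiableAt ℝ w x) (n : ℕ) :
    pd2 (fun y => w y ^ n) x = n * w x ^ (n - 1) * pd2 w x := by
  rw [pd2, fderiv_fun_pow n hw]
  simp [pd2, nsmul_eq_mul, mul_assoc]

end PartialDerivatives

theorem volume_restrict_strip :
    (volume : Measure (ℝ × ℝ)).restrict Strip = volume.prod (volume.restrict (Icc 0 1)) := by
  rw [Strip, Measure.volume_eq_prod, ← Measure.prod_restrict, Measure.restrict_univ]

theorem ae_mem_strip :
    ∀ᵐ x ∂(volume : Measure ℝ).prod (volume.restrict (Icc 0 1)), x ∈ Strip := by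
  rw [← volume_restrict_strip]
  exact ae_restrict_mem (MeasurableSet.univ.prod measurableSet_Icc)

def VanishesBeyond (r : ℝ) (f : ℝ × ℝ → ℝ) : Prop :=
  ∀ x : ℝ × ℝ, r ≤ |x.1| → f x = 0

namespace VanishesBeyond

variable {r : ℝ} {f : ℝ × ℝ → ℝ}

theorem comp (h : VanishesBeyond r f) {g : ℝ → ℝ} (hg : g 0 = 0) :
    VanishesBeyond r fun x => g (f x) := fun x hx => by simp only [h x hx, hg]

theorem fderiv_eq_zero (h : VanishesBeyond r f) {x : ℝ × ℝ} (hx : r + 1 ≤ |x.1|) :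
    fderiv ℝ f x = 0 := by
  have hev : f =ᶠ[𝓝 x] fun _ => 0 :=
    eventually_of_mem ((isOpen_lt continuous_const (continuous_abs.comp continuous_fst)).mem_nhds
      (show r < |x.1| by linarith)) fun y hy => h y (le_of_lt hy)
  rw [hev.fderiv_eq, fderiv_const_apply]

theorem pd1 (h : VanishesBeyond r f) : VanishesBeyond (r + 1) (pd1 f) := fun _ hx => by
  rw [_root_.pd1, h.fderiv_eq_zero hx]; rfl

theorem pd2 (h : VanishesBeyond r f) : VanishesBeyond (r + 1) (pd2 f) := fun _ hx => by
  rw [_root_.pd2, h.fderiv_eq_zero hx]; rfl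

theorem integrableOn_strip (h : VanishesBeyond r f) (hf : Continuous f) :
    IntegrableOn f Strip :=
  (hf.continuousOn.integrableOn_compact (K := Icc (-r) r ×ˢ Icc 0 1)
    (isCompact_Icc.prod isCompact_Icc)).of_forall_sdiff_eq_zero
    (MeasurableSet.univ.prod measurableSet_Icc) fun x hx => h x <| by
      by_contra hlt
      exact hx.2 ⟨abs_le.1 (not_le.1 hlt).le, hx.1.2⟩

theorem memLp_strip (h : VanishesBeyond r f) (hf : Continuous f) :
    MemLp f 2 (volume.restrict Strip) :=
  (memLp_two_iff_integrable_sq hf.aestronglyMeasurable).2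
    ((h.comp (zero_pow two_ne_zero)).integrableOn_strip (hf.pow 2))

theorem integrable_slice (h : VanishesBeyond r f) (hf : Continuous f) (t : ℝ) :
    Integrable fun s => f (s, t) :=
  (hf.comp (continuous_id.prodMk continuous_const)).integrable_of_hasCompactSupport
    (HasCompactSupport.intro (isCompact_Icc (a := -r) (b := r)) fun s hs => h (s, t) <| by
      by_contra hlt
      exact hs (abs_le.1 (not_le.1 hlt).le))

theorem tendsto_slice_atBot (h : VanishesBeyond r f) (t : ℝ) :
    Tendsto (fun s => f (s, t)) atBot (𝓝 0) :=
  tendsto_const_nhds.congr' <| (eventually_le_atBot (-|r|)).mono fun s hs =>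
    (h (s, t) (show r ≤ |s| by linarith [le_abs_self r, neg_le_abs s])).symm

end VanishesBeyond

section Strip

variable {r : ℝ} {v : ℝ × ℝ → ℝ}

theorem gagliardo_nirenberg_strip (hv : ContDiff ℝ 1 v) (h0 : VanishesBeyond r v) :
    ∫ x in Strip, v x ^ 2 ≤
      ((∫ x in Strip, |v x|) + ∫ x in Strip, |pd2 v x|) * ∫ x in Strip, |pd1 v x| := by
  have hd := hv.differentiable one_ne_zero
  have hv0 := (h0.comp abs_zero).integrableOn_strip hv.continuous.abs
  have hv2 := (h0.pd2.comp abs_zero).integrableOn_strip (continuous_pd2 hv).abs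
  have hv1 := (h0.pd1.comp abs_zero).integrableOn_strip (continuous_pd1 hv).abs
  rw [← integral_add hv0 hv2]
  simp only [IntegrableOn, volume_restrict_strip] at hv0 hv1 hv2 ⊢
  refine integral_sq_le_integral_mul_integral_of_abs_le (hv0.add hv2) hv1 ?_ ?_
  · filter_upwards [ae_mem_strip] with x hx
    have hslice := continuous_pd2_slice hv x.1
    calc |v x| ≤ |∫ t in Icc 0 1, v (x.1, t)| + ∫ t in Icc 0 1, |pd2 v (x.1, t)| :=
          abs_le_abs_integral_add_integral_abs_deriv (fun t _ => hasDerivAt_pd2 (hd _))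
            hslice.continuousOn hx.2
      _ ≤ (∫ t in Icc 0 1, |v (x.1, t)|) + ∫ t in Icc 0 1, |pd2 v (x.1, t)| := by
          gcongr; exact abs_integral_le_integral_abs
      _ = ∫ t in Icc 0 1, (|v (x.1, t)| + |pd2 v (x.1, t)|) :=
          (integral_add
            (hv.continuous.comp (continuous_const.prodMk continuous_id)).abs.integrableOn_Icc
            hslice.abs.integrableOn_Icc).symm
  · filter_upwards with x
    exact abs_le_integral_abs_deriv (fun s => hasDerivAt_pd1 (hd _))
      (h0.pd1.integrable_slice (continuous_pd1 hv) x.2) (h0.tendsto_slice_atBot x.2) x.1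

theorem integral_sq_le_integral_sq_pd2_of_abs_le (hv : ContDiff ℝ 1 v) (h0 : VanishesBeyond r v)
    (hbound : ∀ x ∈ Strip, |v x| ≤ ∫ t in Icc 0 1, |pd2 v (x.1, t)|) :
    ∫ x in Strip, v x ^ 2 ≤ ∫ x in Strip, pd2 v x ^ 2 := by
  have hv2 := (h0.comp (zero_pow two_ne_zero)).integrableOn_strip (hv.continuous.pow 2)
  have hd2 := (h0.pd2.comp (zero_pow two_ne_zero)).integrableOn_strip ((continuous_pd2 hv).pow 2)
  simp only [IntegrableOn, volume_restrict_strip] at hv2 hd2 ⊢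
  refine integral_le_of_le_integral_slice hv2 hd2 ?_
  filter_upwards [ae_mem_strip] with x hx
  have hslice := continuous_pd2_slice hv x.1
  calc v x ^ 2 ≤ (∫ t in Icc 0 1, |pd2 v (x.1, t)|) ^ 2 := by
        rw [← sq_abs]; exact pow_le_pow_left₀ (abs_nonneg _) (hbound x hx) 2
    _ ≤ ∫ t in Icc 0 1, pd2 v (x.1, t) ^ 2 :=
        sq_integral_abs_le_integral_sq <|
          (memLp_two_iff_integrable_sq hslice.aestronglyMeasurable).2
            (hslice.pow 2).integrableOn_Icc

theorem integral_sq_le_integral_sq_pd2_of_integral_slice_eq_zero (hv : ContDiff ℝ 1 v)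
    (h0 : VanishesBeyond r v) (hmean : ∀ s, ∫ t in Icc 0 1, v (s, t) = 0) :
    ∫ x in Strip, v x ^ 2 ≤ ∫ x in Strip, pd2 v x ^ 2 :=
  integral_sq_le_integral_sq_pd2_of_abs_le hv h0 fun x hx => by
    simpa [hmean] using abs_le_abs_integral_add_integral_abs_deriv
      (fun t _ => hasDerivAt_pd2 (hv.differentiable one_ne_zero _))
      (continuous_pd2_slice hv x.1).continuousOn hx.2

theorem integral_sq_le_integral_sq_pd2_of_bottom_eq_zero (hv : ContDiff ℝ 1 v)
    (h0 : VanishesBeyond r v) (hbot : ∀ s, v (s, 0) = 0) :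
    ∫ x in Strip, v x ^ 2 ≤ ∫ x in Strip, pd2 v x ^ 2 :=
  integral_sq_le_integral_sq_pd2_of_abs_le hv h0 fun x hx => by
    simpa [hbot] using abs_sub_le_integral_abs_deriv
      (fun t _ => hasDerivAt_pd2 (hv.differentiable one_ne_zero _))
      (continuous_pd2_slice hv x.1).continuousOn (left_mem_Icc.2 zero_le_one) hx.2

theorem integral_slice_eq_zero_of_div_eq_zero {u1 u2 : ℝ × ℝ → ℝ} (h1 : ContDiff ℝ 1 u1)
    (h2 : ContDiff ℝ 1 u2) (h0 : VanishesBeyond r u1)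
    (hdiv : ∀ x ∈ Strip, pd1 u1 x + pd2 u2 x = 0)
    (hbc : ∀ x₁ : ℝ, u2 (x₁, 0) = 0 ∧ u2 (x₁, 1) = 0) (b : ℝ) :
    ∫ t in Icc 0 1, u1 (b, t) = 0 := by
  set a := -(|r| + |b|)
  have hleft : ∀ t, u1 (a, t) = 0 := fun t => h0 (a, t) <| by
    simp only [a, abs_neg, abs_of_nonneg (by positivity : 0 ≤ |r| + |b|)]
    linarith [le_abs_self r, abs_nonneg b]
  have hdiv' : ∀ s, ∫ t in (0 : ℝ)..1, fderiv ℝ u1 (s, t) (1, 0) + fderiv ℝ u2 (s, t) (0, 1) = 0 :=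
    fun s => (intervalIntegral.integral_congr fun t ht => hdiv (s, t)
      ⟨trivial, by rwa [uIcc_of_le zero_le_one] at ht⟩).trans intervalIntegral.integral_zero
  -- divergence theorem on `[a, b] × [0, 1]`: only the flux through `{b} × [0, 1]` survives
  have h := integral2_divergence_prod_of_hasFDerivAt u1 u2 (fderiv ℝ u1) (fderiv ℝ u2) a 0 b 1
    h1.continuous.continuousOn h2.continuous.continuousOn
    (fun x _ => (h1.differentiable one_ne_zero x).hasFDerivAt)
    (fun x _ => (h2.differentiable one_ne_zero x).hasFDerivAt)
    (((continuous_pd1 h1).add (continuous_pd2 h2)).continuousOn.integrableOn_compact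
      (isCompact_uIcc.prod isCompact_uIcc))
  simp only [hdiv', hbc, hleft, intervalIntegral.integral_zero] at h
  rw [integral_Icc_eq_integral_Ioc, ← intervalIntegral.integral_of_le zero_le_one]
  linarith

theorem integral_pow_succ_le (hv : ContDiff ℝ 1 v) (h0 : VanishesBeyond r v) {N : ℝ} (hN : 0 ≤ N)
    (hv2 : ∫ x in Strip, v x ^ 2 ≤ N ^ 2) (hd1 : ∫ x in Strip, pd1 v x ^ 2 ≤ N ^ 2)
    (hd2 : ∫ x in Strip, pd2 v x ^ 2 ≤ N ^ 2) {n : ℕ} (hn : n ≠ 0) :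
    ∫ x in Strip, v x ^ (2 * (n + 1)) ≤
      (n + 1) * (n + 2) * N ^ 2 * ∫ x in Strip, v x ^ (2 * n) := by
  have hd := hv.differentiable one_ne_zero
  set M := ∫ x in Strip, v x ^ (2 * n)
  have hM : 0 ≤ M := integral_nonneg fun x => (even_two_mul n).pow_nonneg _
  have hcs : ∀ (g : ℝ × ℝ → ℝ) (r' : ℝ), Continuous g → VanishesBeyond r' g →
      ∫ x in Strip, g x ^ 2 ≤ N ^ 2 → ∫ x in Strip, |v x ^ n| * |g x| ≤ √M * N :=
    fun g r' hg hg0 hgN =>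
    calc ∫ x in Strip, |v x ^ n| * |g x|
        ≤ √(∫ x in Strip, (v x ^ n) ^ 2) * √(∫ x in Strip, g x ^ 2) :=
          integral_abs_mul_abs_le_sqrt_mul_sqrt
            ((h0.comp (zero_pow hn)).memLp_strip (hv.continuous.pow n)) (hg0.memLp_strip hg)
      _ ≤ √M * N := by
          simp only [← pow_mul, mul_comm n 2]
          gcongr
          exact (Real.sqrt_le_sqrt hgN).trans_eq (Real.sqrt_sq hN)
  have habs : ∀ a b : ℝ, |(↑(n + 1) : ℝ) * a ^ (n + 1 - 1) * b| = (n + 1) * (|a ^ n| * |b|) :=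
    fun a b => by rw [abs_mul, abs_mul, Nat.abs_cast, Nat.add_sub_cancel]; push_cast; ring
  have hw := gagliardo_nirenberg_strip (hv.pow (n + 1)) (h0.comp (zero_pow n.succ_ne_zero))
  simp only [fun x => pd1_pow (hd x), fun x => pd2_pow (hd x), habs, integral_const_mul] at hw
  simp only [pow_succ _ n, abs_mul] at hw
  calc ∫ x in Strip, v x ^ (2 * (n + 1)) = ∫ x in Strip, (v x ^ n * v x) ^ 2 := by
        simp only [← pow_succ, ← pow_mul, mul_comm 2]
    _ ≤ ((∫ x in Strip, |v x ^ n| * |v x|) + (n + 1) * ∫ x in Strip, |v x ^ n| * |pd2 v x|) *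
          ((n + 1) * ∫ x in Strip, |v x ^ n| * |pd1 v x|) := hw
    _ ≤ (√M * N + (n + 1) * (√M * N)) * ((n + 1) * (√M * N)) := by
        gcongr
        · exact hcs v r hv.continuous h0 hv2
        · exact hcs _ _ (continuous_pd2 hv) h0.pd2 hd2
        · exact hcs _ _ (continuous_pd1 hv) h0.pd1 hd1
    _ = (n + 1) * (n + 2) * N ^ 2 * M := by
        linear_combination ((n + 1) * (n + 2) * N ^ 2 : ℝ) * Real.sq_sqrt hM

theorem integral_pow_le_factorial (hv : ContDiff ℝ 1 v) (h0 : VanishesBeyond r v) {N : ℝ}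
    (hN : 0 ≤ N) (hv2 : ∫ x in Strip, v x ^ 2 ≤ N ^ 2) (hd1 : ∫ x in Strip, pd1 v x ^ 2 ≤ N ^ 2)
    (hd2 : ∫ x in Strip, pd2 v x ^ 2 ≤ N ^ 2) {n : ℕ} (hn : 1 ≤ n) :
    ∫ x in Strip, v x ^ (2 * n) ≤ n ! * (n + 1)! * N ^ (2 * n) := by
  induction n, hn using Nat.le_induction with
  | base => norm_num; linarith [sq_nonneg N]
  | succ n hn ih =>
    calc ∫ x in Strip, v x ^ (2 * (n + 1))
        ≤ (n + 1) * (n + 2) * N ^ 2 * ∫ x in Strip, v x ^ (2 * n) :=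
          integral_pow_succ_le hv h0 hN hv2 hd1 hd2 (by omega)
      _ ≤ (n + 1) * (n + 2) * N ^ 2 * (n ! * (n + 1)! * N ^ (2 * n)) := by gcongr
      _ = (n + 1)! * (n + 1 + 1)! * N ^ (2 * (n + 1)) := by
          push_cast [Nat.factorial_succ]; ring

theorem integral_abs_rpow_le (hv : ContDiff ℝ 1 v) (h0 : VanishesBeyond r v) {N : ℝ}
    (hN : 0 ≤ N) (hv2 : ∫ x in Strip, v x ^ 2 ≤ N ^ 2) (hd1 : ∫ x in Strip, pd1 v x ^ 2 ≤ N ^ 2)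
    (hd2 : ∫ x in Strip, pd2 v x ^ 2 ≤ N ^ 2) {q : ℝ} {n : ℕ} (hq : 2 ≤ q) (hqn : q ≤ 2 * n) :
    ∫ x in Strip, |v x| ^ q ≤ (1 + n ! * (n + 1)!) * N ^ q := by
  have hn : 1 ≤ n := by exact_mod_cast (show (1 : ℝ) ≤ n by linarith)
  have hmom := integral_pow_le_factorial hv h0 hN hv2 hd1 hd2 hn
  have hint : ∀ m : ℕ, m ≠ 0 → IntegrableOn (fun x => v x ^ m) Strip := fun m hm =>
    (h0.comp (zero_pow hm)).integrableOn_strip (hv.continuous.pow m)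
  have hinterp : ∀ s > 0, ∫ x in Strip, |v x| ^ q ≤
      s ^ (q - 2) * N ^ 2 + s ^ (q - 2 * n) * (n ! * (n + 1)! * N ^ (2 * n)) := fun s hs =>
    calc ∫ x in Strip, |v x| ^ q
        ≤ ∫ x in Strip, (s ^ (q - 2) * v x ^ 2 + s ^ (q - 2 * n) * v x ^ (2 * n)) :=
          integral_mono_of_nonneg (ae_of_all _ fun x => by positivity)
            (((hint 2 two_ne_zero).const_mul _).add ((hint (2 * n) (by omega)).const_mul _))
            (ae_of_all _ fun x => abs_rpow_le_of_le_two_mul hs hq hqn (v x))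
      _ = s ^ (q - 2) * (∫ x in Strip, v x ^ 2) +
            s ^ (q - 2 * n) * ∫ x in Strip, v x ^ (2 * n) := by
          rw [integral_add ((hint 2 two_ne_zero).const_mul _)
            ((hint (2 * n) (by omega)).const_mul _), integral_const_mul, integral_const_mul]
      _ ≤ _ := by gcongr
  rcases hN.eq_or_lt with rfl | hN
  · simpa [Real.zero_rpow (by linarith : q ≠ 0), zero_pow (by omega : 2 * n ≠ 0)] using
      hinterp 1 one_pos
  · have hcancel : ∀ m : ℕ, N ^ (q - m) * N ^ m = N ^ q := fun m => by
      rw [← Real.rpow_natCast, ← Real.rpow_add hN, sub_add_cancel]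
    have h2 := hcancel 2
    have h2n := hcancel (2 * n)
    push_cast at h2 h2n
    calc ∫ x in Strip, |v x| ^ q ≤ _ := hinterp N hN
      _ = (1 + n ! * (n + 1)!) * N ^ q := by
        linear_combination h2 + (n ! * (n + 1)! : ℝ) * h2n

end Strip

section Norms

variable {Ω : Set (ℝ × ℝ)}

theorem lqNorm_rpow {q : ℝ} (hq : q ≠ 0) (f : ℝ × ℝ → ℝ) :
    lqNorm q Ω f ^ q = ∫ x in Ω, |f x| ^ q := by
  rw [lqNorm, one_div, Real.rpow_inv_rpow (integral_nonneg fun x => by positivity) hq]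

theorem gradL2Norm_nonneg (u1 u2 : ℝ × ℝ → ℝ) : 0 ≤ gradL2Norm Ω u1 u2 := by
  unfold gradL2Norm lqNorm; positivity

theorem gradL2Norm_sq (u1 u2 : ℝ × ℝ → ℝ) :
    gradL2Norm Ω u1 u2 ^ 2 = (∫ x in Ω, pd1 u1 x ^ 2) + (∫ x in Ω, pd2 u1 x ^ 2) +
      (∫ x in Ω, pd1 u2 x ^ 2) + ∫ x in Ω, pd2 u2 x ^ 2 := by
  rw [gradL2Norm]
  simp only [lqNorm_rpow two_ne_zero]
  rw [← Real.sqrt_eq_rpow, Real.sq_sqrt (by positivity)]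
  simp only [Real.rpow_two, sq_abs]

theorem lqNormVec_le_of_integral_le {q K G : ℝ} (hq : 0 < q) (hK : 0 ≤ K) (hG : 0 ≤ G)
    {u1 u2 : ℝ × ℝ → ℝ} (h1 : ∫ x in Ω, |u1 x| ^ q ≤ K * G ^ q)
    (h2 : ∫ x in Ω, |u2 x| ^ q ≤ K * G ^ q) :
    lqNormVec q Ω u1 u2 ≤ (2 * K) ^ (1 / q) * G := by
  rw [lqNormVec, lqNorm_rpow hq.ne', lqNorm_rpow hq.ne']
  calc ((∫ x in Ω, |u1 x| ^ q) + ∫ x in Ω, |u2 x| ^ q) ^ (1 / q) ≤ (2 * K * G ^ q) ^ (1 / q) := by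
        gcongr
        linarith
    _ = (2 * K) ^ (1 / q) * G := by
        rw [Real.mul_rpow (by positivity) (by positivity), one_div, Real.rpow_rpow_inv hG hq.ne']

end Norms

/-- Poincaré–Sobolev inequality on the infinite strip. -/
theorem poincare_sobolev_strip (q : ℝ) (hq : 2 ≤ q) :
    ∃ C : ℝ, 0 < C ∧ ∀ u1 u2 : ℝ × ℝ → ℝ,
      ContDiff ℝ 1 u1 → ContDiff ℝ 1 u2 →
      (∃ r : ℝ, ∀ x : ℝ × ℝ, r ≤ |x.1| → u1 x = 0 ∧ u2 x = 0) →
      (∀ x ∈ Strip, pd1 u1 x + pd2 u2 x = 0) →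
      (∀ x₁ : ℝ, u2 (x₁, 0) = 0 ∧ u2 (x₁, 1) = 0) →
      lqNormVec q Strip u1 u2 ≤ C * gradL2Norm Strip u1 u2 := by
  set n := ⌈q / 2⌉₊
  have hqn : q ≤ 2 * n := by linarith [Nat.le_ceil (q / 2)]
  refine ⟨(2 * (1 + n ! * (n + 1)!)) ^ (1 / q), by positivity, ?_⟩
  rintro u1 u2 h1 h2 ⟨r, hr⟩ hdiv hbc
  have hr1 : VanishesBeyond r u1 := fun x hx => (hr x hx).1
  have hr2 : VanishesBeyond r u2 := fun x hx => (hr x hx).2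
  have hG := gradL2Norm_nonneg (Ω := Strip) u1 u2
  have hsq := gradL2Norm_sq (Ω := Strip) u1 u2
  have hnn : ∀ f : ℝ × ℝ → ℝ, 0 ≤ ∫ x in Strip, f x ^ 2 := fun f =>
    integral_nonneg fun _ => sq_nonneg _
  have hp1 := integral_sq_le_integral_sq_pd2_of_integral_slice_eq_zero h1 hr1
    (integral_slice_eq_zero_of_div_eq_zero h1 h2 hr1 hdiv hbc)
  have hp2 := integral_sq_le_integral_sq_pd2_of_bottom_eq_zero h2 hr2 fun s => (hbc s).1
  refine lqNormVec_le_of_integral_le (by linarith) (by positivity) hG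
    (integral_abs_rpow_le h1 hr1 hG ?_ ?_ ?_ hq hqn)
    (integral_abs_rpow_le h2 hr2 hG ?_ ?_ ?_ hq hqn)
  all_goals linarith [hnn (pd1 u1), hnn (pd2 u1), hnn (pd1 u2), hnn (pd2 u2)]
end
end

section
/- Uniqueness of classical solutions to the semi-dissipative Boussinesq system on a rectangle with Navier boundary conditions: let T > 0, R > 0, μ > 0, k₀ ≤ 0, k₁ ≤ 0, and let g⃗ ∈ ℝ² be a constant vector. Suppose (u,p,θ) and (ũ,p̃,θ̃) are two classical solutions on [0,T]×Ω_R of the system ∂_t u + (u·∇)u + ∇p = μΔu + θ·g⃗, ∂_tθ + u·∇θ = 0, ∂₁u₁ + ∂₂u₂ = 0 (with u, ũ continuous together with their first time derivatives and first and second spatial derivatives, and p, p̃, θ, θ̃ continuously differentiable on [0,T]×Ω_R), both satisfying the boundary conditions u₂(t,x₁,0) = u₂(t,x₁,1) = 0, ∂₂u₁(t,x₁,1) = (k₁/μ)·u₁(t,x₁,1), ∂₂u₁(t,x₁,0) = −(k₀/μ)·u₁(t,x₁,0) for all x₁ ∈ [-R,R], and u(t,·) = 0 on the lateral sides {±R}×[0,1]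 (and the same for ũ). If u(0,·) = ũ(0,·) and θ(0,·) = θ̃(0,·), then u = ũ and θ = θ̃ on all of [0,T]×Ω_R. -/
/-!
Energy method. For the differences `w = u - ũ`, `η = θ - θ̃` put `Φ = |w|² + η²` and
`E(t) = ∫_{Ω_R} Φ(t, ·)`. Subtracting the equations gives pointwise
`∂ₜΦ = -u·∇Φ - 2 w·∇(p - p̃) + 2μ w·Δw + (terms bounded by C Φ)`,
the last bound because `∇ũ`, `∇θ̃` and `g⃗` are bounded on the compact set `[0,T] × Ω_R`.
Since `u` and `w` are divergence free and tangent to `∂Ω_R`, the first two terms integrate to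
zero. Green's formula gives `∫ w·Δw = -∫ |∇w|² + (k₁/μ) ∫_top w₁² + (k₀/μ) ∫_bottom w₁² ≤ 0`
under the Navier conditions with `k₀, k₁ ≤ 0`. Hence `E' ≤ C E`, `E(0) = 0`, and Grönwall gives
`E ≡ 0`; a continuous nonnegative density with zero integral over `Ω_R = closure (interior Ω_R)`
vanishes pointwise.
-/

open MeasureTheory Set

noncomputable section

/-- the rectangle `Ω_R = [-R,R] × [0,1]` -/
def OmegaR (R : ℝ) : Set (ℝ × ℝ) := (Icc (-R) R) ×ˢ (Icc (0 : ℝ) 1)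

/-- spatial partial derivative in the horizontal direction of a
time-dependent scalar field `f(t, x₁, x₂)` -/
def sd1 (f : ℝ × ℝ × ℝ → ℝ) (p : ℝ × ℝ × ℝ) : ℝ :=
  fderiv ℝ (fun y : ℝ × ℝ => f (p.1, y)) p.2 (1, 0)

/-- spatial partial derivative in the vertical direction -/
def sd2 (f : ℝ × ℝ × ℝ → ℝ) (p : ℝ × ℝ × ℝ) : ℝ :=
  fderiv ℝ (fun y : ℝ × ℝ => f (p.1, y)) p.2 (0, 1)

/-- time derivative of a time-dependent scalar field -/
def td (f : ℝ × ℝ × ℝ → ℝ) (p : ℝ × ℝ × ℝ) : ℝ :=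
  deriv (fun s : ℝ => f (s, p.2)) p.1

/-- classical solution of the semi-dissipative Boussinesq system on `[0,T] × Ω_R`
with Navier boundary conditions, gravity vector `(g1, g2)`. -/
structure IsBoussinesqSolution (T R μ k0 k1 g1 g2 : ℝ)
    (u1 u2 pr θ : ℝ × ℝ × ℝ → ℝ) : Prop where
  -- regularity: u continuous together with first time derivative and
  -- first and second spatial derivatives
  regu1 : ContDiff ℝ 1 u1
  regu2 : ContDiff ℝ 1 u2
  regu1x : ∀ t : ℝ, ContDiff ℝ 2 (fun y : ℝ × ℝ => u1 (t, y))
  regu2x : ∀ t : ℝ, ContDiff ℝ 2 (fun y : ℝ × ℝ => u2 (t, y))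
  regu1xx : Continuous (sd1 (sd1 u1)) ∧ Continuous (sd1 (sd2 u1)) ∧
    Continuous (sd2 (sd1 u1)) ∧ Continuous (sd2 (sd2 u1))
  regu2xx : Continuous (sd1 (sd1 u2)) ∧ Continuous (sd1 (sd2 u2)) ∧
    Continuous (sd2 (sd1 u2)) ∧ Continuous (sd2 (sd2 u2))
  -- p and θ continuously differentiable
  regp : ContDiff ℝ 1 pr
  regθ : ContDiff ℝ 1 θ
  -- momentum equations
  mom1 : ∀ p ∈ (Icc (0 : ℝ) T) ×ˢ OmegaR R,
    td u1 p + (u1 p * sd1 u1 p + u2 p * sd2 u1 p) + sd1 pr p =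
      μ * (sd1 (sd1 u1) p + sd2 (sd2 u1) p) + θ p * g1
  mom2 : ∀ p ∈ (Icc (0 : ℝ) T) ×ˢ OmegaR R,
    td u2 p + (u1 p * sd1 u2 p + u2 p * sd2 u2 p) + sd2 pr p =
      μ * (sd1 (sd1 u2) p + sd2 (sd2 u2) p) + θ p * g2
  -- transport equation for the temperature
  transport : ∀ p ∈ (Icc (0 : ℝ) T) ×ˢ OmegaR R,
    td θ p + (u1 p * sd1 θ p + u2 p * sd2 θ p) = 0
  -- incompressibility
  divfree : ∀ p ∈ (Icc (0 : ℝ) T) ×ˢ OmegaR R, sd1 u1 p + sd2 u2 p = 0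
  -- Navier boundary conditions on top and bottom
  bc_tb : ∀ t ∈ Icc (0 : ℝ) T, ∀ x₁ ∈ Icc (-R) R,
    u2 (t, x₁, 0) = 0 ∧ u2 (t, x₁, 1) = 0 ∧
    sd2 u1 (t, x₁, 1) = (k1 / μ) * u1 (t, x₁, 1) ∧
    sd2 u1 (t, x₁, 0) = -(k0 / μ) * u1 (t, x₁, 0)
  -- zero boundary values on the lateral sides
  bc_lat : ∀ t ∈ Icc (0 : ℝ) T, ∀ x₂ ∈ Icc (0 : ℝ) 1,
    u1 (t, R, x₂) = 0 ∧ u1 (t, -R, x₂) = 0 ∧ u2 (t, R, x₂) = 0 ∧ u2 (t, -R, x₂) = 0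

theorem omegaR_eq_Icc (R : ℝ) : OmegaR R = Icc ((-R, 0) : ℝ × ℝ) (R, 1) := by
  rw [Icc_prod_eq]; rfl

theorem isCompact_omegaR (R : ℝ) : IsCompact (OmegaR R) := by
  rw [omegaR_eq_Icc]; exact isCompact_Icc

theorem measurableSet_omegaR (R : ℝ) : MeasurableSet (OmegaR R) :=
  measurableSet_Icc.prod measurableSet_Icc

theorem omegaR_subset_closure_interior {R : ℝ} (hR : 0 < R) :
    OmegaR R ⊆ closure (interior (OmegaR R)) := by
  rw [OmegaR, interior_prod_eq, interior_Icc, interior_Icc, closure_prod_eq,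
    closure_Ioo (by linarith), closure_Ioo zero_ne_one]

theorem intervalIntegral_eq_zero_of_eqOn {f : ℝ → ℝ} {a b : ℝ} (hab : a ≤ b)
    (hf : ∀ x ∈ Icc a b, f x = 0) : ∫ x in a..b, f x = 0 := by
  rw [intervalIntegral.integral_congr (g := fun _ => 0) (by rwa [uIcc_of_le hab]),
    intervalIntegral.integral_zero]

theorem continuous_fderiv_apply_const {n : WithTop ℕ∞} {f : ℝ × ℝ → ℝ} (hf : ContDiff ℝ n f)
    (hn : n ≠ 0) (v : ℝ × ℝ) : Continuous fun y => fderiv ℝ f y v :=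
  (hf.continuous_fderiv hn).clm_apply continuous_const

theorem contDiff_fderiv_apply_const {f : ℝ × ℝ → ℝ} (hf : ContDiff ℝ 2 f) (v : ℝ × ℝ) :
    ContDiff ℝ 1 fun y => fderiv ℝ f y v :=
  (hf.fderiv_right le_rfl).clm_apply contDiff_const

theorem ContDiff.slice {n : WithTop ℕ∞} {f : ℝ × ℝ × ℝ → ℝ} (hf : ContDiff ℝ n f) (t : ℝ) :
    ContDiff ℝ n fun y => f (t, y) :=
  hf.comp (contDiff_const.prodMk contDiff_id)

theorem Continuous.slice {f : ℝ × ℝ × ℝ → ℝ} (hf : Continuous f) (t : ℝ) :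
    Continuous fun y => f (t, y) :=
  hf.comp (continuous_const.prodMk continuous_id)

theorem td_eq_fderiv {f : ℝ × ℝ × ℝ → ℝ} (hf : Differentiable ℝ f) (p : ℝ × ℝ × ℝ) :
    td f p = fderiv ℝ f p (1, 0, 0) :=
  ((hf p).hasFDerivAt.comp_hasDerivAt p.1
    ((hasDerivAt_id p.1).prodMk (hasDerivAt_const p.1 p.2))).deriv

theorem sd1_eq_fderiv {f : ℝ × ℝ × ℝ → ℝ} (hf : Differentiable ℝ f) (p : ℝ × ℝ × ℝ) :
    sd1 f p = fderiv ℝ f p (0, 1, 0) :=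
  DFunLike.congr_fun ((hf _).hasFDerivAt.comp p.2 (hasFDerivAt_prodMk_right p.1 p.2)).fderiv
    (1, 0)

theorem sd2_eq_fderiv {f : ℝ × ℝ × ℝ → ℝ} (hf : Differentiable ℝ f) (p : ℝ × ℝ × ℝ) :
    sd2 f p = fderiv ℝ f p (0, 0, 1) :=
  DFunLike.congr_fun ((hf _).hasFDerivAt.comp p.2 (hasFDerivAt_prodMk_right p.1 p.2)).fderiv
    (0, 1)

theorem continuous_td {f : ℝ × ℝ × ℝ → ℝ} (hf : ContDiff ℝ 1 f) : Continuous (td f) :=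
  ((hf.continuous_fderiv one_ne_zero).clm_apply (continuous_const (y := (1, 0, 0)))).congr
    fun p => (td_eq_fderiv (hf.differentiable one_ne_zero) p).symm

theorem continuous_sd1 {f : ℝ × ℝ × ℝ → ℝ} (hf : ContDiff ℝ 1 f) : Continuous (sd1 f) :=
  ((hf.continuous_fderiv one_ne_zero).clm_apply (continuous_const (y := (0, 1, 0)))).congr
    fun p => (sd1_eq_fderiv (hf.differentiable one_ne_zero) p).symm

theorem continuous_sd2 {f : ℝ × ℝ × ℝ → ℝ} (hf : ContDiff ℝ 1 f) : Continuous (sd2 f) :=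
  ((hf.continuous_fderiv one_ne_zero).clm_apply (continuous_const (y := (0, 0, 1)))).congr
    fun p => (sd2_eq_fderiv (hf.differentiable one_ne_zero) p).symm

theorem sd1_sub {f g : ℝ × ℝ × ℝ → ℝ} {p : ℝ × ℝ × ℝ}
    (hf : DifferentiableAt ℝ (fun y => f (p.1, y)) p.2)
    (hg : DifferentiableAt ℝ (fun y => g (p.1, y)) p.2) : sd1 (f - g) p = sd1 f p - sd1 g p := by
  simp only [sd1, Pi.sub_apply, fderiv_fun_sub hf hg, sub_apply]

theorem sd2_sub {f g : ℝ × ℝ × ℝ → ℝ} {p : ℝ × ℝ × ℝ}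
    (hf : DifferentiableAt ℝ (fun y => f (p.1, y)) p.2)
    (hg : DifferentiableAt ℝ (fun y => g (p.1, y)) p.2) : sd2 (f - g) p = sd2 f p - sd2 g p := by
  simp only [sd2, Pi.sub_apply, fderiv_fun_sub hf hg, sub_apply]

theorem sd1_sd1_sub {f g : ℝ × ℝ × ℝ → ℝ} (hf : ∀ t, ContDiff ℝ 2 fun y => f (t, y))
    (hg : ∀ t, ContDiff ℝ 2 fun y => g (t, y)) (p : ℝ × ℝ × ℝ) :
    sd1 (sd1 (f - g)) p = sd1 (sd1 f) p - sd1 (sd1 g) p := by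
  have : sd1 (f - g) = sd1 f - sd1 g := funext fun q =>
    sd1_sub ((hf q.1).differentiable two_ne_zero _) ((hg q.1).differentiable two_ne_zero _)
  rw [this, sd1_sub ((contDiff_fderiv_apply_const (hf p.1) _).differentiable one_ne_zero _)
    ((contDiff_fderiv_apply_const (hg p.1) _).differentiable one_ne_zero _)]

theorem sd2_sd2_sub {f g : ℝ × ℝ × ℝ → ℝ} (hf : ∀ t, ContDiff ℝ 2 fun y => f (t, y))
    (hg : ∀ t, ContDiff ℝ 2 fun y => g (t, y)) (p : ℝ × ℝ × ℝ) :
    sd2 (sd2 (f - g)) p = sd2 (sd2 f) p - sd2 (sd2 g) p := by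
  have : sd2 (f - g) = sd2 f - sd2 g := funext fun q =>
    sd2_sub ((hf q.1).differentiable two_ne_zero _) ((hg q.1).differentiable two_ne_zero _)
  rw [this, sd2_sub ((contDiff_fderiv_apply_const (hf p.1) _).differentiable one_ne_zero _)
    ((contDiff_fderiv_apply_const (hg p.1) _).differentiable one_ne_zero _)]

theorem integral_sd1_add_sd2_omegaR {R t : ℝ} (hR : 0 ≤ R) {F G : ℝ × ℝ × ℝ → ℝ}
    (hF : Differentiable ℝ fun y => F (t, y)) (hG : Differentiable ℝ fun y => G (t, y))
    (hi : IntegrableOn (fun y => sd1 F (t, y) + sd2 G (t, y)) (OmegaR R)) :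
    ∫ y in OmegaR R, (sd1 F (t, y) + sd2 G (t, y)) =
      (∫ x in (-R)..R, G (t, x, 1)) - (∫ x in (-R)..R, G (t, x, 0)) +
        (∫ x in (0 : ℝ)..1, F (t, R, x)) - ∫ x in (0 : ℝ)..1, F (t, -R, x) := by
  rw [omegaR_eq_Icc] at hi ⊢
  exact integral_divergence_prod_Icc_of_hasFDerivAt_off_countable_of_le _ _ _ _ _ _
    ⟨neg_le_self hR, zero_le_one⟩ ∅ countable_empty hF.continuous.continuousOn
    hG.continuous.continuousOn (fun y _ => (hF y).hasFDerivAt) (fun y _ => (hG y).hasFDerivAt) hi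

theorem integral_sd1_add_sd2_omegaR_nonpos {R t : ℝ} (hR : 0 ≤ R) {F G : ℝ × ℝ × ℝ → ℝ}
    (hF : Differentiable ℝ fun y => F (t, y)) (hG : Differentiable ℝ fun y => G (t, y))
    (hi : IntegrableOn (fun y => sd1 F (t, y) + sd2 G (t, y)) (OmegaR R))
    (htop : ∀ x ∈ Icc (-R) R, G (t, x, 1) ≤ 0) (hbot : ∀ x ∈ Icc (-R) R, 0 ≤ G (t, x, 0))
    (hright : ∀ x ∈ Icc (0 : ℝ) 1, F (t, R, x) ≤ 0)
    (hleft : ∀ x ∈ Icc (0 : ℝ) 1, 0 ≤ F (t, -R, x)) :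
    ∫ y in OmegaR R, (sd1 F (t, y) + sd2 G (t, y)) ≤ 0 := by
  have h1 := intervalIntegral.integral_nonneg (μ := volume) (neg_le_self hR)
    fun x hx => neg_nonneg.2 (htop x hx)
  have h2 := intervalIntegral.integral_nonneg (μ := volume) (neg_le_self hR) hbot
  have h3 := intervalIntegral.integral_nonneg (μ := volume) zero_le_one
    fun x hx => neg_nonneg.2 (hright x hx)
  have h4 := intervalIntegral.integral_nonneg (μ := volume) zero_le_one hleft
  rw [intervalIntegral.integral_neg] at h1 h3
  rw [integral_sd1_add_sd2_omegaR hR hF hG hi]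
  linarith

def advection (a1 a2 φ : ℝ × ℝ × ℝ → ℝ) (p : ℝ × ℝ × ℝ) : ℝ :=
  a1 p * sd1 φ p + a2 p * sd2 φ p

def dotLaplacian (w1 w2 : ℝ × ℝ × ℝ → ℝ) (p : ℝ × ℝ × ℝ) : ℝ :=
  w1 p * (sd1 (sd1 w1) p + sd2 (sd2 w1) p) + w2 p * (sd1 (sd1 w2) p + sd2 (sd2 w2) p)

section FixedTime

variable {R t : ℝ}

theorem continuous_advection {a1 a2 φ : ℝ × ℝ × ℝ → ℝ} (ha1 : Continuous fun y => a1 (t, y))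
    (ha2 : Continuous fun y => a2 (t, y)) (hφ : ContDiff ℝ 1 fun y => φ (t, y)) :
    Continuous fun y => advection a1 a2 φ (t, y) :=
  (ha1.mul (continuous_fderiv_apply_const hφ one_ne_zero (1, 0))).add
    (ha2.mul (continuous_fderiv_apply_const hφ one_ne_zero (0, 1)))

theorem integral_advection_eq_zero (hR : 0 ≤ R) {a1 a2 φ : ℝ × ℝ × ℝ → ℝ}
    (ha1 : ContDiff ℝ 1 fun y => a1 (t, y)) (ha2 : ContDiff ℝ 1 fun y => a2 (t, y))
    (hφ : ContDiff ℝ 1 fun y => φ (t, y))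
    (hdiv : ∀ y ∈ OmegaR R, sd1 a1 (t, y) + sd2 a2 (t, y) = 0)
    (htb : ∀ x ∈ Icc (-R) R, a2 (t, x, 0) = 0 ∧ a2 (t, x, 1) = 0)
    (hlat : ∀ x ∈ Icc (0 : ℝ) 1, a1 (t, R, x) = 0 ∧ a1 (t, -R, x) = 0) :
    ∫ y in OmegaR R, advection a1 a2 φ (t, y) = 0 := by
  have da1 := ha1.differentiable one_ne_zero
  have da2 := ha2.differentiable one_ne_zero
  have dφ := hφ.differentiable one_ne_zero
  have hflux : ∀ y ∈ OmegaR R,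
      sd1 (a1 * φ) (t, y) + sd2 (a2 * φ) (t, y) = advection a1 a2 φ (t, y) := by
    intro y hy
    have := hdiv y hy
    simp only [sd1, sd2, advection, Pi.mul_apply] at this ⊢
    simp only [fderiv_fun_mul (da1 y) (dφ y), fderiv_fun_mul (da2 y) (dφ y), add_apply,
      smul_apply, smul_eq_mul]
    linear_combination φ (t, y) * this
  have hi := (continuous_advection ha1.continuous ha2.continuous hφ).continuousOn
    |>.integrableOn_compact (μ := volume) (isCompact_omegaR R)
  rw [← setIntegral_congr_fun (measurableSet_omegaR R) hflux,
    integral_sd1_add_sd2_omegaR hR (da1.mul dφ) (da2.mul dφ)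
      (hi.congr_fun (fun y hy => (hflux y hy).symm) (measurableSet_omegaR R)),
    intervalIntegral_eq_zero_of_eqOn (neg_le_self hR) fun x hx => by simp [(htb x hx).2],
    intervalIntegral_eq_zero_of_eqOn (neg_le_self hR) fun x hx => by simp [(htb x hx).1],
    intervalIntegral_eq_zero_of_eqOn zero_le_one fun x hx => by simp [(hlat x hx).1],
    intervalIntegral_eq_zero_of_eqOn zero_le_one fun x hx => by simp [(hlat x hx).2]]
  simp

theorem continuous_dotLaplacian {w1 w2 : ℝ × ℝ × ℝ → ℝ} (hw1 : ContDiff ℝ 2 fun y => w1 (t, y))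
    (hw2 : ContDiff ℝ 2 fun y => w2 (t, y)) : Continuous fun y => dotLaplacian w1 w2 (t, y) := by
  have c {f : ℝ × ℝ → ℝ} (hf : ContDiff ℝ 2 f) (v : ℝ × ℝ) :=
    continuous_fderiv_apply_const (contDiff_fderiv_apply_const hf v) one_ne_zero v
  have h11 := c hw1 (1, 0); have h12 := c hw1 (0, 1)
  have h21 := c hw2 (1, 0); have h22 := c hw2 (0, 1)
  exact (hw1.continuous.mul (h11.add h12)).add (hw2.continuous.mul (h21.add h22))

theorem sd1_add_sd2_eq_dotLaplacian_add {w1 w2 : ℝ × ℝ × ℝ → ℝ}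
    (hw1 : ContDiff ℝ 2 fun y => w1 (t, y)) (hw2 : ContDiff ℝ 2 fun y => w2 (t, y))
    (y : ℝ × ℝ) :
    sd1 (w1 * sd1 w1 + w2 * sd1 w2) (t, y) + sd2 (w1 * sd2 w1 + w2 * sd2 w2) (t, y) =
      dotLaplacian w1 w2 (t, y) +
        (sd1 w1 (t, y) ^ 2 + sd1 w2 (t, y) ^ 2 + sd2 w1 (t, y) ^ 2 + sd2 w2 (t, y) ^ 2) := by
  have dw1 := hw1.differentiable two_ne_zero
  have dw2 := hw2.differentiable two_ne_zero
  have d11 := (contDiff_fderiv_apply_const hw1 (1, 0)).differentiable one_ne_zero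
  have d12 := (contDiff_fderiv_apply_const hw1 (0, 1)).differentiable one_ne_zero
  have d21 := (contDiff_fderiv_apply_const hw2 (1, 0)).differentiable one_ne_zero
  have d22 := (contDiff_fderiv_apply_const hw2 (0, 1)).differentiable one_ne_zero
  simp only [sd1, sd2, dotLaplacian, Pi.add_apply, Pi.mul_apply]
  rw [fderiv_fun_add ((dw1 y).fun_mul (d11 y)) ((dw2 y).fun_mul (d21 y)),
    fderiv_fun_add ((dw1 y).fun_mul (d12 y)) ((dw2 y).fun_mul (d22 y)),
    fderiv_fun_mul (dw1 y) (d11 y), fderiv_fun_mul (dw2 y) (d21 y),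
    fderiv_fun_mul (dw1 y) (d12 y), fderiv_fun_mul (dw2 y) (d22 y)]
  simp only [add_apply, smul_apply, smul_eq_mul]
  ring

theorem integral_dotLaplacian_nonpos {c0 c1 : ℝ} (hR : 0 ≤ R) {w1 w2 : ℝ × ℝ × ℝ → ℝ}
    (hw1 : ContDiff ℝ 2 fun y => w1 (t, y)) (hw2 : ContDiff ℝ 2 fun y => w2 (t, y))
    (hc0 : c0 ≤ 0) (hc1 : c1 ≤ 0)
    (htb : ∀ x ∈ Icc (-R) R, w2 (t, x, 0) = 0 ∧ w2 (t, x, 1) = 0 ∧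
      sd2 w1 (t, x, 1) = c1 * w1 (t, x, 1) ∧ sd2 w1 (t, x, 0) = -c0 * w1 (t, x, 0))
    (hlat : ∀ x ∈ Icc (0 : ℝ) 1,
      w1 (t, R, x) = 0 ∧ w1 (t, -R, x) = 0 ∧ w2 (t, R, x) = 0 ∧ w2 (t, -R, x) = 0) :
    ∫ y in OmegaR R, dotLaplacian w1 w2 (t, y) ≤ 0 := by
  have dw1 := hw1.differentiable two_ne_zero
  have dw2 := hw2.differentiable two_ne_zero
  have d {f : ℝ × ℝ → ℝ} (hf : ContDiff ℝ 2 f) (v : ℝ × ℝ) :=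
    (contDiff_fderiv_apply_const hf v).differentiable one_ne_zero
  have c {f : ℝ × ℝ → ℝ} (hf : ContDiff ℝ 2 f) (v : ℝ × ℝ) :=
    continuous_fderiv_apply_const hf two_ne_zero v
  have hi_lap := (continuous_dotLaplacian hw1 hw2).continuousOn.integrableOn_compact
    (μ := volume) (isCompact_omegaR R)
  have hi_grad : IntegrableOn (fun y => sd1 w1 (t, y) ^ 2 + sd1 w2 (t, y) ^ 2 +
      sd2 w1 (t, y) ^ 2 + sd2 w2 (t, y) ^ 2) (OmegaR R) :=
    (((((c hw1 (1, 0)).pow 2).add ((c hw2 (1, 0)).pow 2)).add ((c hw1 (0, 1)).pow 2)).add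
      ((c hw2 (0, 1)).pow 2)).continuousOn.integrableOn_compact (isCompact_omegaR R)
  have hgreen := integral_sd1_add_sd2_omegaR_nonpos hR (F := w1 * sd1 w1 + w2 * sd1 w2)
    (G := w1 * sd2 w1 + w2 * sd2 w2) ((dw1.mul (d hw1 (1, 0))).add (dw2.mul (d hw2 (1, 0))))
    ((dw1.mul (d hw1 (0, 1))).add (dw2.mul (d hw2 (0, 1))))
    ((hi_lap.add hi_grad).congr_fun
      (fun y _ => (sd1_add_sd2_eq_dotLaplacian_add hw1 hw2 y).symm) (measurableSet_omegaR R))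
    -- on the top and bottom sides the flux `w·∂₂w` is `c₁ w₁²` and `-c₀ w₁²`
    (fun x hx => by
      obtain ⟨-, h1, hn, -⟩ := htb x hx
      simp only [Pi.add_apply, Pi.mul_apply, h1, hn]
      nlinarith [sq_nonneg (w1 (t, x, 1))])
    (fun x hx => by
      obtain ⟨h0, -, -, hn⟩ := htb x hx
      simp only [Pi.add_apply, Pi.mul_apply, h0, hn]
      nlinarith [sq_nonneg (w1 (t, x, 0))])
    (fun x hx => by simp [(hlat x hx).1, (hlat x hx).2.2.1])
    (fun x hx => by simp [(hlat x hx).2.1, (hlat x hx).2.2.2])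
  rw [setIntegral_congr_fun (measurableSet_omegaR R)
      (fun y _ => sd1_add_sd2_eq_dotLaplacian_add hw1 hw2 y),
    integral_add hi_lap hi_grad] at hgreen
  have hgrad : 0 ≤ ∫ y in OmegaR R, (sd1 w1 (t, y) ^ 2 + sd1 w2 (t, y) ^ 2 +
      sd2 w1 (t, y) ^ 2 + sd2 w2 (t, y) ^ 2) :=
    setIntegral_nonneg (measurableSet_omegaR R) fun y _ => by positivity
  linarith

end FixedTime

theorem hasDerivAt_setIntegral_td {K : Set (ℝ × ℝ)} (hK : IsCompact K) {f : ℝ × ℝ × ℝ → ℝ}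
    (hf : ContDiff ℝ 1 f) (t : ℝ) :
    HasDerivAt (fun s => ∫ y in K, f (s, y)) (∫ y in K, td f (t, y)) t := by
  have hcont := continuous_td hf
  obtain ⟨M, hM⟩ := ((isCompact_Icc (a := t - 1) (b := t + 1)).prod hK)
    |>.exists_bound_of_continuousOn hcont.continuousOn
  refine (hasDerivAt_integral_of_dominated_loc_of_deriv_le (bound := fun _ => M)
    (F := fun s y => f (s, y)) (F' := fun s y => td f (s, y))
    (Icc_mem_nhds (sub_one_lt t) (lt_add_one t))
    (.of_forall fun s => (hf.continuous.slice s).aestronglyMeasurable)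
    ((hf.continuous.slice t).continuousOn.integrableOn_compact hK)
    (hcont.slice t).aestronglyMeasurable ?_ (integrableOn_const hK.measure_lt_top.ne)
    (.of_forall fun y s _ => ?_)).2
  · exact (ae_restrict_iff' hK.measurableSet).2 (.of_forall fun y hy s hs => hM (s, y) ⟨hs, hy⟩)
  · rw [td_eq_fderiv (hf.differentiable one_ne_zero)]
    exact (hf.differentiable one_ne_zero _).hasFDerivAt.comp_hasDerivAt s
      ((hasDerivAt_id s).prodMk (hasDerivAt_const s y))

theorem eqOn_zero_of_hasDerivAt_le_mul_self {E E' : ℝ → ℝ} {C a b : ℝ}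
    (hE : ∀ t, HasDerivAt E (E' t) t) (hle : ∀ t ∈ Ico a b, E' t ≤ C * E t) (ha : E a = 0)
    (hnn : ∀ t ∈ Icc a b, 0 ≤ E t) : EqOn E 0 (Icc a b) := by
  intro t ht
  refine le_antisymm ?_ (hnn t ht)
  have := le_gronwallBound_of_liminf_deriv_right_le (δ := 0) (ε := 0)
    (fun x _ => (hE x).continuousAt.continuousWithinAt)
    (fun x _ r hr => (hE x).hasDerivWithinAt.liminf_right_slope_le hr) ha.le
    (by simpa using hle) t ht
  rwa [gronwallBound_ε0_δ0] at this

theorem eqOn_zero_of_setIntegral_eq_zero {X : Type*} [TopologicalSpace X] [MeasurableSpace X]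
    [OpensMeasurableSpace X] {μ : Measure X} [μ.IsOpenPosMeasure] {s : Set X} {f : X → ℝ}
    (hs : MeasurableSet s) (hsc : s ⊆ closure (interior s)) (hf : ContinuousOn f s)
    (hi : IntegrableOn f s μ) (hnn : ∀ x ∈ s, 0 ≤ f x) (h0 : ∫ x in s, f x ∂μ = 0) :
    EqOn f 0 s :=
  Measure.eqOn_of_ae_eq ((integral_eq_zero_iff_of_nonneg_ae
    ((ae_restrict_iff' hs).2 (.of_forall hnn)) hi).1 h0) hf continuousOn_const hsc

theorem two_mul_mul_le_of_abs_le {c M x y : ℝ} (h : |c| ≤ M) :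
    2 * (c * x * y) ≤ M * (x ^ 2 + y ^ 2) := by
  obtain ⟨h1, h2⟩ := abs_le.1 h
  nlinarith [mul_nonneg (by linarith : (0 : ℝ) ≤ M - c) (sq_nonneg (x + y)),
    mul_nonneg (by linarith : (0 : ℝ) ≤ M + c) (sq_nonneg (x - y))]

theorem quadratic_form_le_of_abs_le {M w1 w2 η a11 a12 a21 a22 b1 b2 g1 g2 : ℝ} (h11 : |a11| ≤ M)
    (h12 : |a12| ≤ M) (h21 : |a21| ≤ M) (h22 : |a22| ≤ M) (hb1 : |b1| ≤ M) (hb2 : |b2| ≤ M)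
    (hg1 : |g1| ≤ M) (hg2 : |g2| ≤ M) :
    -2 * (w1 * (w1 * a11 + w2 * a12) + w2 * (w1 * a21 + w2 * a22) + η * (w1 * b1 + w2 * b2))
        + 2 * η * (w1 * g1 + w2 * g2) ≤ 6 * M * (w1 ^ 2 + w2 ^ 2 + η ^ 2) := by
  rw [← abs_neg] at h11 h12 h21 h22 hb1 hb2
  linear_combination two_mul_mul_le_of_abs_le (x := w1) (y := w1) h11 +
    two_mul_mul_le_of_abs_le (x := w1) (y := w2) h12 +
    two_mul_mul_le_of_abs_le (x := w1) (y := w2) h21 +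
    two_mul_mul_le_of_abs_le (x := w2) (y := w2) h22 +
    two_mul_mul_le_of_abs_le (x := η) (y := w1) hb1 +
    two_mul_mul_le_of_abs_le (x := η) (y := w2) hb2 +
    two_mul_mul_le_of_abs_le (x := η) (y := w1) hg1 +
    two_mul_mul_le_of_abs_le (x := η) (y := w2) hg2 +
    2 * mul_nonneg ((abs_nonneg g1).trans hg1) (sq_nonneg η)

def energyDensity (u1 u2 θ v1 v2 θ' : ℝ × ℝ × ℝ → ℝ) : ℝ × ℝ × ℝ → ℝ := fun p =>
  (u1 p - v1 p) ^ 2 + (u2 p - v2 p) ^ 2 + (θ p - θ' p) ^ 2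

-- `-2 w·(w·∇)v - 2η w·∇θ' + 2η w·g` for `w = u - v`, `η = θ - θ'`
def lowerOrderTerm (g1 g2 : ℝ) (u1 u2 θ v1 v2 θ' : ℝ × ℝ × ℝ → ℝ) (p : ℝ × ℝ × ℝ) : ℝ :=
  -2 * ((u1 p - v1 p) * ((u1 p - v1 p) * sd1 v1 p + (u2 p - v2 p) * sd2 v1 p)
      + (u2 p - v2 p) * ((u1 p - v1 p) * sd1 v2 p + (u2 p - v2 p) * sd2 v2 p)
      + (θ p - θ' p) * ((u1 p - v1 p) * sd1 θ' p + (u2 p - v2 p) * sd2 θ' p))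
    + 2 * (θ p - θ' p) * ((u1 p - v1 p) * g1 + (u2 p - v2 p) * g2)

theorem energyDensity_nonneg {u1 u2 θ v1 v2 θ' : ℝ × ℝ × ℝ → ℝ} {p : ℝ × ℝ × ℝ} :
    0 ≤ energyDensity u1 u2 θ v1 v2 θ' p := by
  unfold energyDensity; positivity

section Solutions

variable {T R μ k0 k1 g1 g2 : ℝ} {u1 u2 pr θ v1 v2 qr θ' : ℝ × ℝ × ℝ → ℝ}

theorem IsBoussinesqSolution.contDiff_energyDensity
    (hsol : IsBoussinesqSolution T R μ k0 k1 g1 g2 u1 u2 pr θ)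
    (hsol' : IsBoussinesqSolution T R μ k0 k1 g1 g2 v1 v2 qr θ') :
    ContDiff ℝ 1 (energyDensity u1 u2 θ v1 v2 θ') := by
  have := hsol.regu1; have := hsol.regu2; have := hsol.regθ
  have := hsol'.regu1; have := hsol'.regu2; have := hsol'.regθ
  unfold energyDensity; fun_prop

-- Stated for an abstract `D` so that one computation serves `td`, `sd1` and `sd2`.
theorem IsBoussinesqSolution.energyDensity_derivative
    (hsol : IsBoussinesqSolution T R μ k0 k1 g1 g2 u1 u2 pr θ)
    (hsol' : IsBoussinesqSolution T R μ k0 k1 g1 g2 v1 v2 qr θ')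
    {D : (ℝ × ℝ × ℝ → ℝ) → ℝ × ℝ × ℝ → ℝ} {p e : ℝ × ℝ × ℝ}
    (hD : ∀ f, Differentiable ℝ f → D f p = fderiv ℝ f p e) :
    D (energyDensity u1 u2 θ v1 v2 θ') p =
      2 * (u1 p - v1 p) * (D u1 p - D v1 p) + 2 * (u2 p - v2 p) * (D u2 p - D v2 p)
        + 2 * (θ p - θ' p) * (D θ p - D θ' p) := by
  have du1 := hsol.regu1.differentiable one_ne_zero
  have du2 := hsol.regu2.differentiable one_ne_zero
  have dθ := hsol.regθ.differentiable one_ne_zero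
  have dv1 := hsol'.regu1.differentiable one_ne_zero
  have dv2 := hsol'.regu2.differentiable one_ne_zero
  have dθ' := hsol'.regθ.differentiable one_ne_zero
  rw [hD _ ((hsol.contDiff_energyDensity hsol').differentiable one_ne_zero), hD u1 du1, hD v1 dv1,
    hD u2 du2, hD v2 dv2, hD θ dθ, hD θ' dθ']
  unfold energyDensity
  simp (disch := fun_prop) only [fderiv_fun_add, fderiv_fun_sub, fderiv_fun_pow, add_apply,
    sub_apply, smul_apply, smul_eq_mul]
  ring

theorem IsBoussinesqSolution.td_energyDensity
    (hsol : IsBoussinesqSolution T R μ k0 k1 g1 g2 u1 u2 pr θ)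
    (hsol' : IsBoussinesqSolution T R μ k0 k1 g1 g2 v1 v2 qr θ')
    {p : ℝ × ℝ × ℝ} (hp : p ∈ Icc (0 : ℝ) T ×ˢ OmegaR R) :
    td (energyDensity u1 u2 θ v1 v2 θ') p =
      -advection u1 u2 (energyDensity u1 u2 θ v1 v2 θ') p
        - 2 * advection (u1 - v1) (u2 - v2) (pr - qr) p
        + 2 * μ * dotLaplacian (u1 - v1) (u2 - v2) p
        + lowerOrderTerm g1 g2 u1 u2 θ v1 v2 θ' p := by
  have slice {f : ℝ × ℝ × ℝ → ℝ} (hf : ContDiff ℝ 1 f) :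
      DifferentiableAt ℝ (fun y => f (p.1, y)) p.2 :=
    (hf.slice p.1).differentiable one_ne_zero p.2
  rw [advection, advection, dotLaplacian,
    hsol.energyDensity_derivative hsol' fun f hf => td_eq_fderiv hf p,
    hsol.energyDensity_derivative hsol' fun f hf => sd1_eq_fderiv hf p,
    hsol.energyDensity_derivative hsol' fun f hf => sd2_eq_fderiv hf p,
    sd1_sub (slice hsol.regp) (slice hsol'.regp), sd2_sub (slice hsol.regp) (slice hsol'.regp),
    sd1_sd1_sub hsol.regu1x hsol'.regu1x, sd2_sd2_sub hsol.regu1x hsol'.regu1x,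
    sd1_sd1_sub hsol.regu2x hsol'.regu2x, sd2_sd2_sub hsol.regu2x hsol'.regu2x, lowerOrderTerm]
  simp only [Pi.sub_apply]
  linear_combination 2 * (u1 p - v1 p) * (hsol.mom1 p hp - hsol'.mom1 p hp)
    + 2 * (u2 p - v2 p) * (hsol.mom2 p hp - hsol'.mom2 p hp)
    + 2 * (θ p - θ' p) * (hsol.transport p hp - hsol'.transport p hp)

theorem IsBoussinesqSolution.integral_advection_velocity_eq_zero
    (hsol : IsBoussinesqSolution T R μ k0 k1 g1 g2 u1 u2 pr θ) (hR : 0 ≤ R)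
    {φ : ℝ × ℝ × ℝ → ℝ} (hφ : ContDiff ℝ 1 φ) {s : ℝ} (hs : s ∈ Icc (0 : ℝ) T) :
    ∫ y in OmegaR R, advection u1 u2 φ (s, y) = 0 :=
  integral_advection_eq_zero hR (hsol.regu1.slice s) (hsol.regu2.slice s) (hφ.slice s)
    (fun y hy => hsol.divfree (s, y) ⟨hs, hy⟩)
    (fun x hx => ⟨(hsol.bc_tb s hs x hx).1, (hsol.bc_tb s hs x hx).2.1⟩)
    (fun x hx => ⟨(hsol.bc_lat s hs x hx).1, (hsol.bc_lat s hs x hx).2.1⟩)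

theorem IsBoussinesqSolution.integral_advection_sub_eq_zero
    (hsol : IsBoussinesqSolution T R μ k0 k1 g1 g2 u1 u2 pr θ)
    (hsol' : IsBoussinesqSolution T R μ k0 k1 g1 g2 v1 v2 qr θ') (hR : 0 ≤ R)
    {φ : ℝ × ℝ × ℝ → ℝ} (hφ : ContDiff ℝ 1 φ) {s : ℝ} (hs : s ∈ Icc (0 : ℝ) T) :
    ∫ y in OmegaR R, advection (u1 - v1) (u2 - v2) φ (s, y) = 0 := by
  refine integral_advection_eq_zero hR ((hsol.regu1.sub hsol'.regu1).slice s)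
    ((hsol.regu2.sub hsol'.regu2).slice s) (hφ.slice s) (fun y hy => ?_) (fun x hx => ?_)
    (fun x hx => ?_)
  · have d {f : ℝ × ℝ × ℝ → ℝ} (hf : ContDiff ℝ 1 f) :
        DifferentiableAt ℝ (fun z => f ((s, y).1, z)) (s, y).2 :=
      (hf.slice s).differentiable one_ne_zero y
    rw [sd1_sub (d hsol.regu1) (d hsol'.regu1), sd2_sub (d hsol.regu2) (d hsol'.regu2)]
    linear_combination hsol.divfree (s, y) ⟨hs, hy⟩ - hsol'.divfree (s, y) ⟨hs, hy⟩
  · simp [(hsol.bc_tb s hs x hx).1, (hsol.bc_tb s hs x hx).2.1, (hsol'.bc_tb s hs x hx).1,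
      (hsol'.bc_tb s hs x hx).2.1]
  · simp [(hsol.bc_lat s hs x hx).1, (hsol.bc_lat s hs x hx).2.1, (hsol'.bc_lat s hs x hx).1,
      (hsol'.bc_lat s hs x hx).2.1]

theorem IsBoussinesqSolution.integral_dotLaplacian_sub_nonpos
    (hsol : IsBoussinesqSolution T R μ k0 k1 g1 g2 u1 u2 pr θ)
    (hsol' : IsBoussinesqSolution T R μ k0 k1 g1 g2 v1 v2 qr θ') (hR : 0 ≤ R) (hμ : 0 < μ)
    (hk0 : k0 ≤ 0) (hk1 : k1 ≤ 0) {s : ℝ} (hs : s ∈ Icc (0 : ℝ) T) :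
    ∫ y in OmegaR R, dotLaplacian (u1 - v1) (u2 - v2) (s, y) ≤ 0 := by
  refine integral_dotLaplacian_nonpos hR ((hsol.regu1x s).sub (hsol'.regu1x s))
    ((hsol.regu2x s).sub (hsol'.regu2x s)) (div_nonpos_of_nonpos_of_nonneg hk0 hμ.le)
    (div_nonpos_of_nonpos_of_nonneg hk1 hμ.le) (fun x hx => ?_) (fun x hx => ?_)
  · obtain ⟨h0, h1, n1, n0⟩ := hsol.bc_tb s hs x hx
    obtain ⟨h0', h1', n1', n0'⟩ := hsol'.bc_tb s hs x hx
    have d {f : ℝ × ℝ × ℝ → ℝ} (hf : ∀ t, ContDiff ℝ 2 fun y => f (t, y)) (y : ℝ × ℝ) :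
        DifferentiableAt ℝ (fun z => f ((s, y).1, z)) (s, y).2 :=
      (hf s).differentiable two_ne_zero y
    refine ⟨by simp [h0, h0'], by simp [h1, h1'], ?_, ?_⟩
    · rw [sd2_sub (d hsol.regu1x _) (d hsol'.regu1x _), n1, n1', Pi.sub_apply]
      ring
    · rw [sd2_sub (d hsol.regu1x _) (d hsol'.regu1x _), n0, n0', Pi.sub_apply]
      ring
  · obtain ⟨a, b, c, d⟩ := hsol.bc_lat s hs x hx
    obtain ⟨a', b', c', d'⟩ := hsol'.bc_lat s hs x hx
    simp [a, b, c, d, a', b', c', d']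

theorem IsBoussinesqSolution.exists_lowerOrderTerm_le
    (hsol' : IsBoussinesqSolution T R μ k0 k1 g1 g2 v1 v2 qr θ') :
    ∃ C, ∀ p ∈ Icc (0 : ℝ) T ×ˢ OmegaR R,
      lowerOrderTerm g1 g2 u1 u2 θ v1 v2 θ' p ≤ C * energyDensity u1 u2 θ v1 v2 θ' p := by
  have := continuous_sd1 hsol'.regu1; have := continuous_sd2 hsol'.regu1
  have := continuous_sd1 hsol'.regu2; have := continuous_sd2 hsol'.regu2
  have := continuous_sd1 hsol'.regθ; have := continuous_sd2 hsol'.regθ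
  obtain ⟨M, hM⟩ := (isCompact_Icc.prod (isCompact_omegaR R)).exists_bound_of_continuousOn
    (f := fun p => |sd1 v1 p| + |sd2 v1 p| + |sd1 v2 p| + |sd2 v2 p| + |sd1 θ' p| + |sd2 θ' p|
      + |g1| + |g2|) (by fun_prop)
  refine ⟨6 * M, fun p hp => ?_⟩
  have hMp := (le_abs_self _).trans ((Real.norm_eq_abs _).symm.trans_le (hM p hp))
  have := abs_nonneg (sd1 v1 p); have := abs_nonneg (sd2 v1 p); have := abs_nonneg (sd1 v2 p)
  have := abs_nonneg (sd2 v2 p); have := abs_nonneg (sd1 θ' p); have := abs_nonneg (sd2 θ' p)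
  have := abs_nonneg g1; have := abs_nonneg g2
  refine quadratic_form_le_of_abs_le ?_ ?_ ?_ ?_ ?_ ?_ ?_ ?_ <;> linarith

theorem IsBoussinesqSolution.continuous_lowerOrderTerm
    (hsol : IsBoussinesqSolution T R μ k0 k1 g1 g2 u1 u2 pr θ)
    (hsol' : IsBoussinesqSolution T R μ k0 k1 g1 g2 v1 v2 qr θ') :
    Continuous (lowerOrderTerm g1 g2 u1 u2 θ v1 v2 θ') := by
  have := hsol.regu1.continuous; have := hsol.regu2.continuous; have := hsol.regθ.continuous
  have := hsol'.regu1.continuous; have := hsol'.regu2.continuous; have := hsol'.regθ.continuous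
  have := continuous_sd1 hsol'.regu1; have := continuous_sd2 hsol'.regu1
  have := continuous_sd1 hsol'.regu2; have := continuous_sd2 hsol'.regu2
  have := continuous_sd1 hsol'.regθ; have := continuous_sd2 hsol'.regθ
  unfold lowerOrderTerm; fun_prop

theorem IsBoussinesqSolution.integral_td_energyDensity
    (hsol : IsBoussinesqSolution T R μ k0 k1 g1 g2 u1 u2 pr θ)
    (hsol' : IsBoussinesqSolution T R μ k0 k1 g1 g2 v1 v2 qr θ') {s : ℝ}
    (hs : s ∈ Icc (0 : ℝ) T) :
    ∫ y in OmegaR R, td (energyDensity u1 u2 θ v1 v2 θ') (s, y) =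
      -(∫ y in OmegaR R, advection u1 u2 (energyDensity u1 u2 θ v1 v2 θ') (s, y))
        - 2 * (∫ y in OmegaR R, advection (u1 - v1) (u2 - v2) (pr - qr) (s, y))
        + 2 * μ * (∫ y in OmegaR R, dotLaplacian (u1 - v1) (u2 - v2) (s, y))
        + ∫ y in OmegaR R, lowerOrderTerm g1 g2 u1 u2 θ v1 v2 θ' (s, y) := by
  have int {f : ℝ × ℝ → ℝ} (hf : Continuous f) : IntegrableOn f (OmegaR R) :=
    hf.continuousOn.integrableOn_compact (isCompact_omegaR R)
  have i_adv := int (continuous_advection (a1 := u1) (a2 := u2) (hsol.regu1.continuous.slice s)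
    (hsol.regu2.continuous.slice s) ((hsol.contDiff_energyDensity hsol').slice s))
  have i_press := int (continuous_advection (a1 := u1 - v1) (a2 := u2 - v2) (φ := pr - qr)
    ((hsol.regu1.sub hsol'.regu1).continuous.slice s)
    ((hsol.regu2.sub hsol'.regu2).continuous.slice s) ((hsol.regp.sub hsol'.regp).slice s))
  have i_visc := int (continuous_dotLaplacian (w1 := u1 - v1) (w2 := u2 - v2)
    ((hsol.regu1x s).sub (hsol'.regu1x s)) ((hsol.regu2x s).sub (hsol'.regu2x s)))
  rw [setIntegral_congr_fun (measurableSet_omegaR R)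
      fun y hy => hsol.td_energyDensity hsol' ⟨hs, hy⟩,
    integral_add ?_ (int ((hsol.continuous_lowerOrderTerm hsol').slice s)),
    integral_add ?_ (i_visc.const_mul _), integral_sub ?_ (i_press.const_mul _), integral_neg,
    integral_const_mul, integral_const_mul]
  exacts [i_adv.neg, i_adv.neg.sub (i_press.const_mul _),
    (i_adv.neg.sub (i_press.const_mul _)).add (i_visc.const_mul _)]

theorem IsBoussinesqSolution.exists_integral_td_energyDensity_le
    (hsol : IsBoussinesqSolution T R μ k0 k1 g1 g2 u1 u2 pr θ)
    (hsol' : IsBoussinesqSolution T R μ k0 k1 g1 g2 v1 v2 qr θ') (hR : 0 ≤ R) (hμ : 0 < μ)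
    (hk0 : k0 ≤ 0) (hk1 : k1 ≤ 0) :
    ∃ C, ∀ s ∈ Icc (0 : ℝ) T, ∫ y in OmegaR R, td (energyDensity u1 u2 θ v1 v2 θ') (s, y) ≤
      C * ∫ y in OmegaR R, energyDensity u1 u2 θ v1 v2 θ' (s, y) := by
  obtain ⟨C, hC⟩ := hsol'.exists_lowerOrderTerm_le (u1 := u1) (u2 := u2) (θ := θ)
  refine ⟨C, fun s hs => ?_⟩
  have hΦ := hsol.contDiff_energyDensity hsol'
  have h_low : ∫ y in OmegaR R, lowerOrderTerm g1 g2 u1 u2 θ v1 v2 θ' (s, y) ≤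
      C * ∫ y in OmegaR R, energyDensity u1 u2 θ v1 v2 θ' (s, y) := by
    rw [← integral_const_mul]
    exact setIntegral_mono_on
      (((hsol.continuous_lowerOrderTerm hsol').slice s).continuousOn.integrableOn_compact
        (isCompact_omegaR R))
      ((hΦ.continuous.slice s).continuousOn.integrableOn_compact (isCompact_omegaR R)
        |>.const_mul C) (measurableSet_omegaR R) fun y hy => hC (s, y) ⟨hs, hy⟩
  have h_visc := hsol.integral_dotLaplacian_sub_nonpos hsol' hR hμ hk0 hk1 hs
  rw [hsol.integral_td_energyDensity hsol' hs, hsol.integral_advection_velocity_eq_zero hR hΦ hs,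
    hsol.integral_advection_sub_eq_zero hsol' hR (φ := pr - qr) (hsol.regp.sub hsol'.regp) hs]
  nlinarith

theorem IsBoussinesqSolution.integral_energyDensity_eq_zero
    (hsol : IsBoussinesqSolution T R μ k0 k1 g1 g2 u1 u2 pr θ)
    (hsol' : IsBoussinesqSolution T R μ k0 k1 g1 g2 v1 v2 qr θ') (hR : 0 ≤ R) (hμ : 0 < μ)
    (hk0 : k0 ≤ 0) (hk1 : k1 ≤ 0)
    (hinit : ∀ x ∈ OmegaR R, u1 (0, x) = v1 (0, x) ∧ u2 (0, x) = v2 (0, x) ∧ θ (0, x) = θ' (0, x))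
    {t : ℝ} (ht : t ∈ Icc (0 : ℝ) T) :
    ∫ y in OmegaR R, energyDensity u1 u2 θ v1 v2 θ' (t, y) = 0 := by
  obtain ⟨C, hC⟩ := hsol.exists_integral_td_energyDensity_le hsol' hR hμ hk0 hk1
  refine eqOn_zero_of_hasDerivAt_le_mul_self
    (hasDerivAt_setIntegral_td (isCompact_omegaR R) (hsol.contDiff_energyDensity hsol'))
    (fun s hs => hC s (Ico_subset_Icc_self hs)) ?_
    (fun s _ => setIntegral_nonneg (measurableSet_omegaR R) fun y _ => energyDensity_nonneg) ht
  refine setIntegral_eq_zero_of_forall_eq_zero fun y hy => ?_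
  obtain ⟨h1, h2, h3⟩ := hinit y hy
  simp [energyDensity, h1, h2, h3]

end Solutions

theorem boussinesq_uniqueness_general (T R μ k0 k1 g1 g2 : ℝ)
    (hR : 0 < R) (hμ : 0 < μ) (hk0 : k0 ≤ 0) (hk1 : k1 ≤ 0)
    (u1 u2 pr θ v1 v2 qr θ' : ℝ × ℝ × ℝ → ℝ)
    (hsol : IsBoussinesqSolution T R μ k0 k1 g1 g2 u1 u2 pr θ)
    (hsol' : IsBoussinesqSolution T R μ k0 k1 g1 g2 v1 v2 qr θ')
    (hinit : ∀ x ∈ OmegaR R,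
      u1 (0, x) = v1 (0, x) ∧ u2 (0, x) = v2 (0, x) ∧ θ (0, x) = θ' (0, x)) :
    ∀ p ∈ (Icc (0 : ℝ) T) ×ˢ OmegaR R,
      u1 p = v1 p ∧ u2 p = v2 p ∧ θ p = θ' p := by
  rintro ⟨t, x⟩ ⟨ht, hx⟩
  have hΦ := (hsol.contDiff_energyDensity hsol').slice t |>.continuous
  have hzero : energyDensity u1 u2 θ v1 v2 θ' (t, x) = 0 :=
    eqOn_zero_of_setIntegral_eq_zero (measurableSet_omegaR R) (omegaR_subset_closure_interior hR)
      hΦ.continuousOn (hΦ.continuousOn.integrableOn_compact (isCompact_omegaR R))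
      (fun _ _ => energyDensity_nonneg)
      (hsol.integral_energyDensity_eq_zero hsol' hR.le hμ hk0 hk1 hinit ht) hx
  obtain ⟨h12, h3⟩ := (add_eq_zero_iff_of_nonneg (by positivity) (by positivity)).1 hzero
  obtain ⟨h1, h2⟩ := (add_eq_zero_iff_of_nonneg (by positivity) (by positivity)).1 h12
  exact ⟨sub_eq_zero.1 (pow_eq_zero_iff two_ne_zero |>.1 h1),
    sub_eq_zero.1 (pow_eq_zero_iff two_ne_zero |>.1 h2),
    sub_eq_zero.1 (pow_eq_zero_iff two_ne_zero |>.1 h3)⟩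

/-- Uniqueness of classical solutions to the semi-dissipative Boussinesq system
on a rectangle with Navier boundary conditions. -/
theorem boussinesq_uniqueness (T R μ k0 k1 g1 g2 : ℝ)
    (hT : 0 < T) (hR : 0 < R) (hμ : 0 < μ) (hk0 : k0 ≤ 0) (hk1 : k1 ≤ 0)
    (u1 u2 pr θ v1 v2 qr θ' : ℝ × ℝ × ℝ → ℝ)
    (hsol : IsBoussinesqSolution T R μ k0 k1 g1 g2 u1 u2 pr θ)
    (hsol' : IsBoussinesqSolution T R μ k0 k1 g1 g2 v1 v2 qr θ')
    (hinit : ∀ x ∈ OmegaR R,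
      u1 (0, x) = v1 (0, x) ∧ u2 (0, x) = v2 (0, x) ∧ θ (0, x) = θ' (0, x)) :
    ∀ p ∈ (Icc (0 : ℝ) T) ×ˢ OmegaR R,
      u1 p = v1 p ∧ u2 p = v2 p ∧ θ p = θ' p :=
  boussinesq_uniqueness_general T R μ k0 k1 g1 g2 hR hμ hk0 hk1 u1 u2 pr θ v1 v2 qr θ' hsol hsol'
    hinit
end
end
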